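/- Let b, c be nonzero real numbers, set a = b + c and k = b² + c² + bc, and let n₃(a,b,c) be the Lie algebra structure on ℝ⁷ with nonzero brackets [e₁,e₂] = −a e₄, [e₁,e₃] = −b e₅, [e₂,e₃] = −c e₆. Let φ₃ = e^{123}+e^{145}+e^{167}+e^{246}−e^{257}−e^{347}−e^{356}, τ₃ = −c e^{16} + b e^{25} − a e^{34}, λ = 5k, and D = −k·diag(1,1,1,2,2,2,2). Then: (i) dφ₃ = 0; (ii) D is a symmetric derivation of n₃(a,b,c); (iii) dτ₃ = 2k e^{123}; and (iv) λφ₃ + L_D φ₃ = 2k e^{123}. Hence dτ₃ = λφ₃ + L_D φ₃, i.e. (n₃(b+c,b,c), φ₃) is an expanding algebraic Laplacian soliton, since dτ₃ = Δ_{φ₃} φ₃. -/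

import Mathlib

noncomputable section

/-- `ℝ⁷` with its standard basis. -/
abbrev V7 := Fin 7 → ℝ

/-- `e^{i₁…i_k}`, the wedge of dual-basis covectors, in the determinant convention:
`(e^{i₁}∧…∧e^{i_k})(X₁,…,X_k) = det (Xₚ)_{i_q}`. -/
def wE {k : ℕ} (idx : Fin k → Fin 7) (X : Fin k → V7) : ℝ :=
  Matrix.det (Matrix.of fun p q : Fin k => X p (idx q))

/-- The index in `{0, …, k}` of the `m`-th element (0-based) of `{0, …, k} \ {i, j}`,
assuming `i < j`. -/
def skip2 (i j m : ℕ) : ℕ := if m < i then m else if m < j - 1 then m + 1 else m + 2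

/-- The Chevalley–Eilenberg differential of a `k`-form `ψ` with respect to a bracket `br`:
`dψ(X₁,…,X_{k+1}) = Σ_{i<j} (−1)^{i+j} ψ([Xᵢ,Xⱼ], X₁,…,X̂ᵢ,…,X̂ⱼ,…,X_{k+1})`. -/
def CEd {V : Type*} (br : V → V → V) {k : ℕ} (ψ : (Fin k → V) → ℝ)
    (X : Fin (k + 1) → V) : ℝ :=
  ∑ i : Fin (k + 1), ∑ j : Fin (k + 1),
    if (i : ℕ) < (j : ℕ) then
      (-1 : ℝ) ^ ((i : ℕ) + (j : ℕ)) *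
        ψ (fun l => if (l : ℕ) = 0 then br (X i) (X j)
          else X ⟨min (skip2 (i : ℕ) (j : ℕ) ((l : ℕ) - 1)) k,
            Nat.lt_succ_of_le (Nat.min_le_right _ _)⟩)
    else 0

/-- The algebraic Lie derivative of a `k`-form with respect to an endomorphism `D`:
`(L_D ψ)(X₁,…,X_k) = ψ(DX₁,X₂,…,X_k) + … + ψ(X₁,…,X_{k−1},DX_k)`. -/
def LD {V : Type*} (D : V → V) {k : ℕ} (ψ : (Fin k → V) → ℝ) (X : Fin k → V) : ℝ :=
  ∑ i : Fin k, ψ (Function.update X i (D (X i)))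

/-- The Lie bracket of `n₃(b+c,b,c)`: `[e₁,e₂] = −(b+c) e₄`, `[e₁,e₃] = −b e₅`,
`[e₂,e₃] = −c e₆`. -/
def br3 (b c : ℝ) (X Y : V7) : V7 :=
  ![0, 0, 0, -(b + c) * (X 0 * Y 1 - X 1 * Y 0), -b * (X 0 * Y 2 - X 2 * Y 0),
    -c * (X 1 * Y 2 - X 2 * Y 1), 0]

/-- `φ₃ = e^{123}+e^{145}+e^{167}+e^{246}−e^{257}−e^{347}−e^{356}`. -/
def phi3 : (Fin 3 → V7) → ℝ := fun X =>
  wE ![0, 1, 2] X + wE ![0, 3, 4] X + wE ![0, 5, 6] X + wE ![1, 3, 5] X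
    - wE ![1, 4, 6] X - wE ![2, 3, 6] X - wE ![2, 4, 5] X

/-- `τ₃ = −c e^{16} + b e^{25} − a e^{34}` with `a = b + c`. -/
def tau3 (b c : ℝ) : (Fin 2 → V7) → ℝ := fun X =>
  -c * wE ![0, 5] X + b * wE ![1, 4] X - (b + c) * wE ![2, 3] X

/-- `D = −k·diag(1,1,1,2,2,2,2)` with `k = b² + c² + bc`. -/
def D3 (b c : ℝ) (X : V7) : V7 :=
  ![-(b ^ 2 + c ^ 2 + b * c) * X 0, -(b ^ 2 + c ^ 2 + b * c) * X 1,
    -(b ^ 2 + c ^ 2 + b * c) * X 2, -2 * (b ^ 2 + c ^ 2 + b * c) * X 3,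
    -2 * (b ^ 2 + c ^ 2 + b * c) * X 4, -2 * (b ^ 2 + c ^ 2 + b * c) * X 5,
    -2 * (b ^ 2 + c ^ 2 + b * c) * X 6]

/-! Everything reduces to finite computations. The Chevalley–Eilenberg differential of a 2-form
(3-form) has 3 (6) terms, and the bracket only produces `e₄, e₅, e₆`; this gives `dφ₃ = 0` and
`dτ₃ = (a² + b² + c²) e^{123} = 2k e^{123}`. The endomorphism `D` is diagonal, so `L_D` acts on
`e^{ijl}` by the sum of the weights of `i, j, l`: by `−3k` on `e^{123}` and by `−5k` on the other
six terms of `φ₃`, whence `5kφ₃ + L_D φ₃ = 2k e^{123}`. Finally `4k = (b + 2c)² + 3b² > 0`. -/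

theorem Matrix.sum_det_updateRow_mul_diagonal {n R : Type*} [Fintype n] [DecidableEq n]
    [CommRing R] (M : Matrix n n R) (w : n → R) :
    ∑ i, (M.updateRow i ((M * Matrix.diagonal w) i)).det = (∑ q, w q) * M.det := by
  have hrow (σ : Equiv.Perm n) (i : n) :
      ∏ p, M.updateRow i ((M * Matrix.diagonal w) i) (σ p) p = w (σ.symm i) * ∏ p, M (σ p) p := by
    calc ∏ p, M.updateRow i ((M * Matrix.diagonal w) i) (σ p) p
        = ∏ p, (if p = σ.symm i then w p else 1) * M (σ p) p := by
          refine Finset.prod_congr rfl fun p _ => ?_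
          simp only [Matrix.updateRow_apply, Matrix.mul_diagonal, Equiv.eq_symm_apply]
          split_ifs with h
          · rw [h, mul_comm]
          · rw [one_mul]
      _ = w (σ.symm i) * ∏ p, M (σ p) p := by
          rw [Finset.prod_mul_distrib, Finset.prod_ite_eq', if_pos (Finset.mem_univ _)]
  simp only [Matrix.det_apply, Finset.mul_sum, hrow]
  rw [Finset.sum_comm]
  refine Finset.sum_congr rfl fun σ _ => ?_
  rw [← Finset.smul_sum, ← Finset.sum_mul, Equiv.sum_comp σ.symm w, mul_smul_comm]

theorem LD_diagonal_wE {k : ℕ} (d : Fin 7 → ℝ) (idx : Fin k → Fin 7) (X : Fin k → V7) :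
    LD (fun x m => d m * x m) (wE idx) X = (∑ q, d (idx q)) * wE idx X := by
  set M := Matrix.of fun p q => X p (idx q)
  have hupdate (i : Fin k) :
      Matrix.of (fun p q => Function.update X i (fun m => d m * X i m) p (idx q))
        = M.updateRow i ((M * Matrix.diagonal (d ∘ idx)) i) := by
    ext p q
    by_cases h : p = i
    · subst h; simp [M, mul_comm]
    · simp [M, h]
  simp only [LD, wE, hupdate]
  exact Matrix.sum_det_updateRow_mul_diagonal M (d ∘ idx)

theorem CEd_two_form {V : Type*} (br : V → V → V) (ψ : (Fin 2 → V) → ℝ) (X : Fin 3 → V) :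
    CEd br ψ X = -ψ ![br (X 0) (X 1), X 2] + ψ ![br (X 0) (X 2), X 1]
      - ψ ![br (X 1) (X 2), X 0] := by
  simp only [CEd, Fin.sum_univ_succ, Fin.sum_univ_zero]
  norm_num [sub_eq_add_neg, ← add_assoc]
  congr <;> funext l <;> fin_cases l <;> rfl

theorem CEd_three_form {V : Type*} (br : V → V → V) (ψ : (Fin 3 → V) → ℝ) (X : Fin 4 → V) :
    CEd br ψ X = -ψ ![br (X 0) (X 1), X 2, X 3] + ψ ![br (X 0) (X 2), X 1, X 3]
      - ψ ![br (X 0) (X 3), X 1, X 2] - ψ ![br (X 1) (X 2), X 0, X 3]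
      + ψ ![br (X 1) (X 3), X 0, X 2] - ψ ![br (X 2) (X 3), X 0, X 1] := by
  simp only [CEd, Fin.sum_univ_succ, Fin.sum_univ_zero]
  norm_num [sub_eq_add_neg, ← add_assoc]
  congr <;> funext l <;> fin_cases l <;> rfl

theorem wE_two (i j : Fin 7) (X : Fin 2 → V7) : wE ![i, j] X = X 0 i * X 1 j - X 0 j * X 1 i := by
  simp [wE, Matrix.det_fin_two]

theorem wE_three (i j l : Fin 7) (X : Fin 3 → V7) : wE ![i, j, l] X =
    X 0 i * X 1 j * X 2 l - X 0 i * X 1 l * X 2 j - X 0 j * X 1 i * X 2 l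
      + X 0 j * X 1 l * X 2 i + X 0 l * X 1 i * X 2 j - X 0 l * X 1 j * X 2 i := by
  simp [wE, Matrix.det_fin_three]

theorem CEd_br3_phi3 (b c : ℝ) : CEd (br3 b c) phi3 = fun _ => 0 := by
  funext X
  simp only [CEd_three_form, phi3, wE_three, br3, Matrix.cons_val_zero, Matrix.cons_val_one,
    Matrix.cons_val]
  ring

theorem CEd_br3_tau3 (b c : ℝ) :
    CEd (br3 b c) (tau3 b c) = fun X => 2 * (b ^ 2 + c ^ 2 + b * c) * wE ![0, 1, 2] X := by
  funext X
  simp only [CEd_two_form, tau3, wE_two, wE_three, br3, Matrix.cons_val_zero,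
    Matrix.cons_val_one, Matrix.cons_val]
  ring

theorem D3_eq_diagonal (b c : ℝ) : D3 b c = fun x m =>
    ![-(b ^ 2 + c ^ 2 + b * c), -(b ^ 2 + c ^ 2 + b * c), -(b ^ 2 + c ^ 2 + b * c),
      -2 * (b ^ 2 + c ^ 2 + b * c), -2 * (b ^ 2 + c ^ 2 + b * c), -2 * (b ^ 2 + c ^ 2 + b * c),
      -2 * (b ^ 2 + c ^ 2 + b * c)] m * x m := by
  funext x m
  fin_cases m <;> rfl

theorem D3_br3 (b c : ℝ) (X Y : V7) :
    D3 b c (br3 b c X Y) = br3 b c (D3 b c X) Y + br3 b c X (D3 b c Y) := by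
  funext m
  fin_cases m <;> simp only [D3, br3, Fin.zero_eta, Fin.mk_one, Fin.reduceFinMk,
    Matrix.cons_val_zero, Matrix.cons_val_one, Matrix.cons_val, Pi.add_apply] <;> ring

theorem sum_D3_mul (b c : ℝ) (X Y : V7) : ∑ i, D3 b c X i * Y i = ∑ i, X i * D3 b c Y i := by
  rw [D3_eq_diagonal]
  exact Finset.sum_congr rfl fun i _ => by ring

theorem LD_D3_phi3 (b c : ℝ) (X : Fin 3 → V7) :
    LD (D3 b c) phi3 X = 2 * (b ^ 2 + c ^ 2 + b * c) * wE ![0, 1, 2] X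
      - 5 * (b ^ 2 + c ^ 2 + b * c) * phi3 X := by
  have hsum : LD (D3 b c) phi3 X = LD (D3 b c) (wE ![0, 1, 2]) X + LD (D3 b c) (wE ![0, 3, 4]) X
      + LD (D3 b c) (wE ![0, 5, 6]) X + LD (D3 b c) (wE ![1, 3, 5]) X
      - LD (D3 b c) (wE ![1, 4, 6]) X - LD (D3 b c) (wE ![2, 3, 6]) X
      - LD (D3 b c) (wE ![2, 4, 5]) X := by
    simp only [LD, phi3, Finset.sum_add_distrib, Finset.sum_sub_distrib]
  rw [hsum, phi3]
  simp only [D3_eq_diagonal, LD_diagonal_wE, Fin.sum_univ_three, Matrix.cons_val_zero,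
    Matrix.cons_val_one, Matrix.cons_val]
  ring

theorem n3_algebraic_soliton_general (b c : ℝ) (hb : b ≠ 0) :
    (CEd (br3 b c) phi3 = fun _ => (0 : ℝ)) ∧
      (∀ X Y : V7, D3 b c (br3 b c X Y) = br3 b c (D3 b c X) Y + br3 b c X (D3 b c Y)) ∧
      (∀ X Y : V7, ∑ i, D3 b c X i * Y i = ∑ i, X i * D3 b c Y i) ∧
      (CEd (br3 b c) (tau3 b c) =
        fun X => 2 * (b ^ 2 + c ^ 2 + b * c) * wE ![0, 1, 2] X) ∧
      ((fun X => 5 * (b ^ 2 + c ^ 2 + b * c) * phi3 X + LD (D3 b c) phi3 X) =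
        fun X => 2 * (b ^ 2 + c ^ 2 + b * c) * wE ![0, 1, 2] X) ∧
      (CEd (br3 b c) (tau3 b c) =
        fun X => 5 * (b ^ 2 + c ^ 2 + b * c) * phi3 X + LD (D3 b c) phi3 X) ∧
      0 < 5 * (b ^ 2 + c ^ 2 + b * c) := by
  have hsoliton : (fun X => 5 * (b ^ 2 + c ^ 2 + b * c) * phi3 X + LD (D3 b c) phi3 X) =
      fun X => 2 * (b ^ 2 + c ^ 2 + b * c) * wE ![0, 1, 2] X := by
    funext X
    rw [LD_D3_phi3]
    ring
  have hk : 0 < b ^ 2 + c ^ 2 + b * c := by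
    nlinarith [sq_nonneg (b + 2 * c), sq_pos_of_ne_zero hb]
  exact ⟨CEd_br3_phi3 b c, D3_br3 b c, sum_D3_mul b c, CEd_br3_tau3 b c, hsoliton,
    (CEd_br3_tau3 b c).trans hsoliton.symm, by positivity⟩

/-- `(n₃(b+c,b,c), φ₃)` is an expanding algebraic Laplacian soliton, with
`k = b² + c² + bc` and `λ = 5k`: (i) `dφ₃ = 0`; (ii) `D` is a symmetric derivation;
(iii) `dτ₃ = 2k e^{123}`; (iv) `λφ₃ + L_D φ₃ = 2k e^{123}`; hence `dτ₃ = λφ₃ + L_D φ₃`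
with `λ > 0`. -/
theorem n3_algebraic_soliton (b c : ℝ) (hb : b ≠ 0) (hc : c ≠ 0) :
    (CEd (br3 b c) phi3 = fun _ => (0 : ℝ)) ∧
      (∀ X Y : V7, D3 b c (br3 b c X Y) = br3 b c (D3 b c X) Y + br3 b c X (D3 b c Y)) ∧
      (∀ X Y : V7, ∑ i, D3 b c X i * Y i = ∑ i, X i * D3 b c Y i) ∧
      (CEd (br3 b c) (tau3 b c) =
        fun X => 2 * (b ^ 2 + c ^ 2 + b * c) * wE ![0, 1, 2] X) ∧
      ((fun X => 5 * (b ^ 2 + c ^ 2 + b * c) * phi3 X + LD (D3 b c) phi3 X) =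
        fun X => 2 * (b ^ 2 + c ^ 2 + b * c) * wE ![0, 1, 2] X) ∧
      (CEd (br3 b c) (tau3 b c) =
        fun X => 5 * (b ^ 2 + c ^ 2 + b * c) * phi3 X + LD (D3 b c) phi3 X) ∧
      0 < 5 * (b ^ 2 + c ^ 2 + b * c) :=
  n3_algebraic_soliton_general b c hb
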